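/- arXiv:2405.04242 — 4 statements merged into one kernel-verified Lean document; each statement's English description precedes it below -/
import Mathlib

section
/- Let β ≥ 1, γ ∈ (0,1] with γβ > 1, c > 0, H₁, H₂ ∈ (0,1] and T₁, T₂ > 0. Then for every ε > 0 one has ∫₀^ε ( ln ∏_{i=1,2} ( T_i 2^{1/H_i} c^{1/(γ H_i)} / (2 u^{1/(γ H_i)}) + 1 ) )^{1/β} du ≤ c₁ ε^{1 − 1/(γβ)}, where c₁ = (2^{1/β} c^{1/(γβ)} / (1 − 1/(γβ))) · Σ_{i=1,2} (1/H_i) (T_i/2)^{H_i/β}. -/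
/-!
Bound each factor separately: for `0 < H ≤ 1`, subadditivity of `t ↦ t ^ H` gives
`H log (x + 1) ≤ log (x ^ H + 1) ≤ x ^ H`, so `(log (x + 1)) ^ (1/β) ≤ x ^ (H/β) / H`, and for the
factors at hand `x ^ (H/β)` is a constant multiple of `u ^ (-1/(γβ))`. Since `(·) ^ (1/β)` is
subadditive, the integrand is dominated by `K u ^ (-1/(γβ))`, which is integrable near `0`
exactly because `γβ > 1`.
-/

open MeasureTheory Real Set

namespace Real

lemma log_add_one_le_rpow_div {x H : ℝ} (hx : 0 ≤ x) (hH : 0 < H) (hH1 : H ≤ 1) :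
    log (x + 1) ≤ x ^ H / H := by
  have hsub : (x + 1) ^ H ≤ x ^ H + 1 := by
    simpa using rpow_add_le_add_rpow hx zero_le_one hH.le hH1
  have hlog : H * log (x + 1) ≤ x ^ H :=
    calc H * log (x + 1) = log ((x + 1) ^ H) := (log_rpow (by linarith) H).symm
      _ ≤ log (x ^ H + 1) := log_le_log (by positivity) hsub
      _ ≤ x ^ H := by linarith [log_le_sub_one_of_pos (x := x ^ H + 1) (by positivity)]
  rw [le_div_iff₀ hH]
  linarith

lemma rpow_log_add_one_le {x H p : ℝ} (hx : 0 ≤ x) (hH : 0 < H) (hH1 : H ≤ 1)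
    (hp : 0 ≤ p) (hp1 : p ≤ 1) :
    log (x + 1) ^ p ≤ x ^ (H * p) / H :=
  calc log (x + 1) ^ p ≤ (x ^ H / H) ^ p :=
        rpow_le_rpow (log_nonneg (by linarith)) (log_add_one_le_rpow_div hx hH hH1) hp
    _ = x ^ (H * p) / H ^ p := by rw [div_rpow (by positivity) hH.le, ← rpow_mul hx]
    _ ≤ x ^ (H * p) / H := by
        gcongr
        simpa using rpow_le_rpow_of_exponent_ge hH hH1 hp1

lemma rpow_log_mul_le_add {a b p : ℝ} (ha : 1 ≤ a) (hb : 1 ≤ b) (hp : 0 ≤ p) (hp1 : p ≤ 1) :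
    log (a * b) ^ p ≤ log a ^ p + log b ^ p := by
  rw [log_mul (by positivity) (by positivity)]
  exact rpow_add_le_add_rpow (log_nonneg ha) (log_nonneg hb) hp hp1

end Real

lemma lintegral_Ioo_ofReal_rpow {r ε : ℝ} (hr : -1 < r) (hε : 0 ≤ ε) :
    ∫⁻ u in Ioo 0 ε, ENNReal.ofReal (u ^ r) = ENNReal.ofReal (ε ^ (r + 1) / (r + 1)) := by
  have hint : IntegrableOn (fun u : ℝ => u ^ r) (Ioc 0 ε) :=
    (intervalIntegrable_iff_integrableOn_Ioc_of_le hε).1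
      (intervalIntegral.intervalIntegrable_rpow' hr)
  rw [← ofReal_integral_eq_lintegral_ofReal (hint.mono_set Ioo_subset_Ioc_self)
      (ae_restrict_of_forall_mem measurableSet_Ioo fun u hu ↦ rpow_nonneg hu.1.le r),
    ← integral_Ioc_eq_integral_Ioo, ← intervalIntegral.integral_of_le hε,
    integral_rpow (Or.inl hr), zero_rpow (by linarith), sub_zero]

lemma rpow_log_scaled_add_one_le {β γ c H T u : ℝ} (hβ : 1 ≤ β) (hγ : 0 < γ) (hc : 0 ≤ c)
    (hH : 0 < H) (hH1 : H ≤ 1) (hT : 0 ≤ T) (hu : 0 < u) :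
    log (T * 2 ^ (1/H) * c ^ (1/(γ*H)) / (2 * u ^ (1/(γ*H))) + 1) ^ (1/β) ≤
      (1/H) * (T/2) ^ (H/β) * (2 ^ (1/β) * c ^ (1/(γ*β)) * u ^ (-(1/(γ*β)))) := by
  have hβ0 : 0 < β := by linarith
  set x := T * 2 ^ (1/H) * c ^ (1/(γ*H)) / (2 * u ^ (1/(γ*H)))
  have hx : x = (T/2) * 2 ^ (1/H) * c ^ (1/(γ*H)) * u ^ (-(1/(γ*H))) := by
    rw [rpow_neg hu.le]; ring
  have hxpow : x ^ (H * (1/β)) =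
      (T/2) ^ (H/β) * 2 ^ (1/β) * c ^ (1/(γ*β)) * u ^ (-(1/(γ*β))) := by
    have e1 : 1/H * (H * (1/β)) = 1/β := by field_simp
    have e2 : 1/(γ*H) * (H * (1/β)) = 1/(γ*β) := by field_simp
    have e3 : -(1/(γ*H)) * (H * (1/β)) = -(1/(γ*β)) := by field_simp
    rw [hx, mul_rpow (by positivity) (by positivity), mul_rpow (by positivity) (by positivity),
      mul_rpow (by positivity) (by positivity), ← rpow_mul zero_le_two, ← rpow_mul hc,
      ← rpow_mul hu.le, e1, e2, e3, mul_one_div]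
  calc log (x + 1) ^ (1/β) ≤ x ^ (H * (1/β)) / H :=
        rpow_log_add_one_le (by positivity) hH hH1 (by positivity)
          ((div_le_one hβ0).2 hβ)
    _ = _ := by rw [hxpow]; ring

/-- the entropy-integral bound
`∫₀^ε (ln ∏ᵢ (Tᵢ 2^{1/Hᵢ} c^{1/(γHᵢ)}/(2u^{1/(γHᵢ)}) + 1))^{1/β} du ≤ c₁ ε^{1 − 1/(γβ)}`. -/
theorem stmt2 (β γ c H₁ H₂ T₁ T₂ : ℝ)
    (hβ : 1 ≤ β) (hγ : γ ∈ Set.Ioc (0:ℝ) 1) (hγβ : 1 < γ * β)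
    (hc : 0 < c) (hH₁ : H₁ ∈ Set.Ioc (0:ℝ) 1) (hH₂ : H₂ ∈ Set.Ioc (0:ℝ) 1)
    (hT₁ : 0 < T₁) (hT₂ : 0 < T₂) :
    ∀ ε : ℝ, 0 < ε →
      ∫⁻ u in Set.Ioo (0:ℝ) ε,
          ENNReal.ofReal
            ((Real.log ((T₁ * 2 ^ (1/H₁) * c ^ (1/(γ*H₁)) / (2 * u ^ (1/(γ*H₁))) + 1) *
              (T₂ * 2 ^ (1/H₂) * c ^ (1/(γ*H₂)) / (2 * u ^ (1/(γ*H₂))) + 1))) ^ (1/β)) ≤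
        ENNReal.ofReal ((2 ^ (1/β) * c ^ (1/(γ*β)) / (1 - 1/(γ*β)) *
          ((1/H₁) * (T₁/2) ^ (H₁/β) + (1/H₂) * (T₂/2) ^ (H₂/β))) * ε ^ (1 - 1/(γ*β))) := by
  intro ε hε
  obtain ⟨hγ0, -⟩ := hγ
  obtain ⟨hH₁0, hH₁1⟩ := hH₁
  obtain ⟨hH₂0, hH₂1⟩ := hH₂
  have hβ0 : 0 < β := by linarith
  have hexp : 1/(γ*β) < 1 := (div_lt_one (by linarith)).2 hγβ
  set K := 2 ^ (1/β) * c ^ (1/(γ*β)) * ((1/H₁) * (T₁/2) ^ (H₁/β) + (1/H₂) * (T₂/2) ^ (H₂/β))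
  have hK : 0 ≤ K := by positivity
  calc _ ≤ ∫⁻ u in Ioo (0:ℝ) ε, ENNReal.ofReal K * ENNReal.ofReal (u ^ (-(1/(γ*β)))) := by
        refine setLIntegral_mono' measurableSet_Ioo fun u ⟨hu, _⟩ ↦ ?_
        rw [← ENNReal.ofReal_mul hK]
        refine ENNReal.ofReal_le_ofReal ((rpow_log_mul_le_add
          (le_add_of_nonneg_left (by positivity)) (le_add_of_nonneg_left (by positivity))
          (by positivity) ((div_le_one hβ0).2 hβ)).trans ?_)
        have b₁ := rpow_log_scaled_add_one_le hβ hγ0 hc.le hH₁0 hH₁1 hT₁.le hu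
        have b₂ := rpow_log_scaled_add_one_le hβ hγ0 hc.le hH₂0 hH₂1 hT₂.le hu
        linarith
    _ = ENNReal.ofReal (K * (ε ^ (-(1/(γ*β)) + 1) / (-(1/(γ*β)) + 1))) := by
        rw [lintegral_const_mul' _ _ ENNReal.ofReal_ne_top,
          lintegral_Ioo_ofReal_rpow (by linarith) hε.le, ENNReal.ofReal_mul hK]
    _ = _ := by
        rw [neg_add_eq_sub]
        simp only [K]
        ring_nf
end

section
/- For every H ∈ (0,1/2] and all 0 ≤ s ≤ t, ∫_ℝ ((1 − exp(−2 s ξ²)) / (2 ξ²)) · (1 − exp(−(t−s) ξ²))² · |ξ|^{1−2H} dξ ≤ c_{2,H} (t−s)^H, where c_{2,H} = (1/2) ∫_ℝ (1 − exp(−u²))² |u|^{−1−2H} du < ∞. -/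
open MeasureTheory Real Set

/-!
Since `1 - e^{-2sξ²} ≤ 1`, the integrand is at most `½ (1 - e^{-(t-s)ξ²})² |ξ|^{-1-2H}`,
and the substitution `u = √(t-s) ξ` turns the integral of the latter into `c_{2,H} (t-s)^H`.
The constant is finite because `(1 - e^{-u²})² ≤ min(u⁴, 1)`, which makes the integrand
`O(|u|^{3-2H})` at the origin and `O(|u|^{-1-2H})` at infinity.
-/

theorem integrable_comp_abs_of_integrableOn_Ioi {E : Type*} [NormedAddCommGroup E] {f : ℝ → E}
    (hf : IntegrableOn f (Ioi 0)) : Integrable fun x => f |x| := by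
  have hIoi : IntegrableOn (fun x => f |x|) (Ioi 0) :=
    hf.congr_fun (fun x hx => by rw [abs_of_pos (mem_Ioi.mp hx)]) measurableSet_Ioi
  have hIic : IntegrableOn (fun x => f |x|) (Iic 0) := by
    have hneg : MeasurableEmbedding fun x : ℝ => -x := (Homeomorph.neg ℝ).measurableEmbedding
    rw [← Measure.map_neg_eq_self (volume : Measure ℝ), hneg.integrableOn_map_iff]
    simp_rw [Function.comp_def, abs_neg, neg_preimage, neg_Iic, neg_zero]
    exact Iff.mpr integrableOn_Ici_iff_integrableOn_Ioi hIoi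
  simpa only [Iic_union_Ioi, integrableOn_univ] using hIic.union hIoi

theorem integrable_one_sub_exp_neg_sq_sq_mul_abs_rpow {H : ℝ} (hH₀ : 0 < H) (hH₂ : H < 2) :
    Integrable fun u : ℝ => (1 - exp (-u ^ 2)) ^ 2 * |u| ^ (-1 - 2 * H) := by
  set g : ℝ → ℝ := fun x => (1 - exp (-x ^ 2)) ^ 2 * x ^ (-1 - 2 * H)
  have hg : Measurable g := by fun_prop
  have hg_nonneg : ∀ x, 0 ≤ x → 0 ≤ g x := fun x hx => by positivity
  have h_exp_le_one : ∀ x : ℝ, 1 - exp (-x ^ 2) ≤ 1 := fun x => by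
    linarith [exp_pos (-x ^ 2)]
  have h_exp_nonneg : ∀ x : ℝ, 0 ≤ 1 - exp (-x ^ 2) := fun x => by
    linarith [exp_le_one_iff.mpr (neg_nonpos.mpr (sq_nonneg x))]
  suffices IntegrableOn g (Ioi 0) by
    simpa only [g, sq_abs] using integrable_comp_abs_of_integrableOn_Ioi this
  rw [← Ioo_union_Ici_eq_Ioi zero_lt_one, integrableOn_union,
    integrableOn_Ici_iff_integrableOn_Ioi]
  constructor
  · refine Integrable.mono' ((intervalIntegral.integrableOn_Ioo_rpow_iff zero_lt_one).mpr
      (by linarith : -1 < 3 - 2 * H)) hg.aestronglyMeasurable.restrict ?_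
    filter_upwards [ae_restrict_mem measurableSet_Ioo] with x hx
    rw [norm_of_nonneg (hg_nonneg x hx.1.le)]
    calc (1 - exp (-x ^ 2)) ^ 2 * x ^ (-1 - 2 * H) ≤ (x ^ 2) ^ 2 * x ^ (-1 - 2 * H) := by
          refine mul_le_mul_of_nonneg_right (pow_le_pow_left₀ (h_exp_nonneg x) ?_ 2)
            (rpow_nonneg hx.1.le _)
          linarith [one_sub_le_exp_neg (x ^ 2)]
      _ = x ^ (3 - 2 * H) := by
          rw [← pow_mul, ← rpow_natCast, ← rpow_add hx.1]
          congr 1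
          push_cast
          ring
  · refine Integrable.mono' (integrableOn_Ioi_rpow_of_lt (by linarith : -1 - 2 * H < -1)
      zero_lt_one) hg.aestronglyMeasurable.restrict ?_
    filter_upwards [ae_restrict_mem measurableSet_Ioi] with x hx
    have hx : 0 < x := zero_lt_one.trans hx
    rw [norm_of_nonneg (hg_nonneg x hx.le)]
    calc (1 - exp (-x ^ 2)) ^ 2 * x ^ (-1 - 2 * H) ≤ 1 ^ 2 * x ^ (-1 - 2 * H) :=
          mul_le_mul_of_nonneg_right (pow_le_pow_left₀ (h_exp_nonneg x) (h_exp_le_one x) 2)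
            (by positivity)
      _ = x ^ (-1 - 2 * H) := by rw [one_pow, one_mul]

theorem one_sub_exp_neg_mul_sq_sq_mul_abs_rpow_eq (H : ℝ) {τ : ℝ} (hτ : 0 ≤ τ) (ξ : ℝ) :
    (1 - exp (-(τ * ξ ^ 2))) ^ 2 * |ξ| ^ (-1 - 2 * H) =
      √τ ^ (1 + 2 * H) * ((1 - exp (-(√τ * ξ) ^ 2)) ^ 2 * |√τ * ξ| ^ (-1 - 2 * H)) := by
  rcases hτ.eq_or_lt with rfl | hτ
  · simp
  have ha : 0 < √τ := sqrt_pos.mpr hτ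
  have h_cancel : √τ ^ (1 + 2 * H) * √τ ^ (-1 - 2 * H) = 1 := by
    rw [← rpow_add ha, show 1 + 2 * H + (-1 - 2 * H) = 0 by ring, rpow_zero]
  rw [mul_pow, sq_sqrt hτ.le, abs_mul, abs_of_pos ha, mul_rpow ha.le (abs_nonneg ξ),
    mul_left_comm _ (√τ ^ _), ← mul_assoc, h_cancel, one_mul]

theorem integrable_one_sub_exp_neg_mul_sq_sq_mul_abs_rpow {H : ℝ}
    (hg : Integrable fun u : ℝ => (1 - exp (-u ^ 2)) ^ 2 * |u| ^ (-1 - 2 * H)) {τ : ℝ}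
    (hτ : 0 ≤ τ) :
    Integrable fun ξ : ℝ => (1 - exp (-(τ * ξ ^ 2))) ^ 2 * |ξ| ^ (-1 - 2 * H) := by
  rcases hτ.eq_or_lt with rfl | hτ
  · simp
  simp_rw [one_sub_exp_neg_mul_sq_sq_mul_abs_rpow_eq H hτ.le]
  exact (hg.comp_mul_left' (sqrt_pos.mpr hτ).ne').const_mul _

theorem integral_one_sub_exp_neg_mul_sq_sq_mul_abs_rpow {H : ℝ} (hH : H ≠ 0) {τ : ℝ}
    (hτ : 0 ≤ τ) :
    ∫ ξ : ℝ, (1 - exp (-(τ * ξ ^ 2))) ^ 2 * |ξ| ^ (-1 - 2 * H) =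
      τ ^ H * ∫ u : ℝ, (1 - exp (-u ^ 2)) ^ 2 * |u| ^ (-1 - 2 * H) := by
  rcases hτ.eq_or_lt with rfl | hτ
  · simp [zero_rpow hH]
  have ha : 0 < √τ := sqrt_pos.mpr hτ
  simp_rw [one_sub_exp_neg_mul_sq_sq_mul_abs_rpow_eq H hτ.le]
  rw [integral_const_mul, Measure.integral_comp_mul_left
    (fun u => (1 - exp (-u ^ 2)) ^ 2 * |u| ^ (-1 - 2 * H)), smul_eq_mul, ← mul_assoc,
    abs_of_pos (inv_pos.mpr ha), ← rpow_neg_one, ← rpow_add ha, sqrt_eq_rpow,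
    ← rpow_mul hτ.le]
  ring_nf

theorem one_sub_exp_neg_div_mul_rpow_le (s H ξ : ℝ) {M : ℝ} (hM : 0 ≤ M) :
    (1 - exp (-(2 * s * ξ ^ 2))) / (2 * ξ ^ 2) * M * |ξ| ^ (1 - 2 * H) ≤
      1 / 2 * (M * |ξ| ^ (-1 - 2 * H)) := by
  rcases eq_or_ne ξ 0 with rfl | hξ
  · simpa using mul_nonneg hM (rpow_nonneg le_rfl (-1 - 2 * H))
  have hξ' : 0 < |ξ| := abs_pos.mpr hξ
  have h_rpow : |ξ| ^ (1 - 2 * H) = ξ ^ 2 * |ξ| ^ (-1 - 2 * H) := by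
    rw [show 1 - 2 * H = 2 + (-1 - 2 * H) by ring, rpow_add hξ', rpow_two, sq_abs]
  calc (1 - exp (-(2 * s * ξ ^ 2))) / (2 * ξ ^ 2) * M * |ξ| ^ (1 - 2 * H)
      = (1 - exp (-(2 * s * ξ ^ 2))) / 2 * (M * |ξ| ^ (-1 - 2 * H)) := by
        rw [h_rpow]; field_simp
    _ ≤ 1 / 2 * (M * |ξ| ^ (-1 - 2 * H)) := by
        gcongr
        linarith [exp_pos (-(2 * s * ξ ^ 2))]

theorem stmt12_general (H : ℝ) (hH : H ∈ Set.Ioc (0:ℝ) (1/2)) (s t : ℝ) (hst : s ≤ t) :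
    Integrable (fun u : ℝ => (1 - Real.exp (-u^2))^2 * |u| ^ (-1 - 2*H)) ∧
    ∫⁻ ξ : ℝ, ENNReal.ofReal
        ((1 - Real.exp (-(2 * s * ξ^2))) / (2 * ξ^2) *
          (1 - Real.exp (-((t - s) * ξ^2)))^2 * |ξ| ^ (1 - 2*H)) ≤
      ENNReal.ofReal
        ((1/2 * ∫ u : ℝ, (1 - Real.exp (-u^2))^2 * |u| ^ (-1 - 2*H)) * (t - s) ^ H) := by
  obtain ⟨hH₀, hH⟩ := hH
  have hg := integrable_one_sub_exp_neg_sq_sq_mul_abs_rpow hH₀ (by linarith)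
  have hτ : 0 ≤ t - s := sub_nonneg.mpr hst
  refine ⟨hg, ?_⟩
  calc _ ≤ ∫⁻ ξ : ℝ, ENNReal.ofReal
          (1 / 2 * ((1 - exp (-((t - s) * ξ ^ 2))) ^ 2 * |ξ| ^ (-1 - 2 * H))) :=
        lintegral_mono fun ξ => ENNReal.ofReal_le_ofReal
          (one_sub_exp_neg_div_mul_rpow_le s H ξ (sq_nonneg _))
    _ = ENNReal.ofReal
          (∫ ξ : ℝ, 1 / 2 * ((1 - exp (-((t - s) * ξ ^ 2))) ^ 2 * |ξ| ^ (-1 - 2 * H))) :=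
        (ofReal_integral_eq_lintegral_ofReal
          ((integrable_one_sub_exp_neg_mul_sq_sq_mul_abs_rpow hg hτ).const_mul _)
          (ae_of_all _ fun ξ => by positivity)).symm
    _ = _ := by
        rw [integral_const_mul, integral_one_sub_exp_neg_mul_sq_sq_mul_abs_rpow hH₀.ne' hτ]
        ring_nf

/-- the temporal-increment integral bound
`∫_ℝ ((1−e^{−2sξ²})/(2ξ²)) (1−e^{−(t−s)ξ²})² |ξ|^{1−2H} dξ ≤ c_{2,H} (t−s)^H`, where
`c_{2,H} = (1/2)∫_ℝ (1−e^{−u²})² |u|^{−1−2H} du < ∞`. -/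
theorem stmt12 (H : ℝ) (hH : H ∈ Set.Ioc (0:ℝ) (1/2)) (s t : ℝ) (hs : 0 ≤ s) (hst : s ≤ t) :
    Integrable (fun u : ℝ => (1 - Real.exp (-u^2))^2 * |u| ^ (-1 - 2*H)) ∧
    ∫⁻ ξ : ℝ, ENNReal.ofReal
        ((1 - Real.exp (-(2 * s * ξ^2))) / (2 * ξ^2) *
          (1 - Real.exp (-((t - s) * ξ^2)))^2 * |ξ| ^ (1 - 2*H)) ≤
      ENNReal.ofReal
        ((1/2 * ∫ u : ℝ, (1 - Real.exp (-u^2))^2 * |u| ^ (-1 - 2*H)) * (t - s) ^ H) :=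
  stmt12_general H hH s t hst
end

section
/- For every H ∈ (0,1/2), every s ≥ 0 and every a ∈ ℝ, ∫_ℝ ((1 − exp(−2 s ξ²)) / (2 ξ²)) · (1 − cos(a ξ)) · |ξ|^{1−2H} dξ ≤ c_{3,H} |a|^{2H}, where c_{3,H} = ∫₀^∞ (1 − cos x) x^{−1−2H} dx = (2H)^{−1} Γ(1−2H) cos(Hπ). -/
/-!
Writing `x^{-1-s} = Γ(1+s)⁻¹ ∫₀^∞ t^s e^{-xt} dt` and using the Laplace transform
`∫₀^∞ (1 - cos x) e^{-tx} dx = 1/(t(1+t²))`, Tonelli turns `∫₀^∞ (1 - cos x) x^{-1-s} dx`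
into `Γ(1+s)⁻¹ ∫₀^∞ t^{s-1}/(1+t²) dt`. The same trick with `1/(1+t²) = ∫₀^∞ e^{-(1+t²)u} du`
evaluates the last integral as `Γ(s/2)Γ(1-s/2)/2`, and for `s = 2H` the reflection formula
turns `Γ(H)Γ(1-H)/(2Γ(1+2H))` into `(2H)⁻¹Γ(1-2H)cos(Hπ)`.

For the bound, `1 - e^{-2sξ²} ≤ 1` dominates the integrand by `(1 - cos(aξ))|ξ|^{-1-2H}/2`,
an even function whose integral is `c_{3,H}|a|^{2H}` after the substitution `x = |a|ξ`.
-/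

open MeasureTheory Real Set

lemma lintegral_ofReal_const_mul {α : Type*} [MeasurableSpace α] (μ : Measure α) {c : ℝ}
    (hc : 0 ≤ c) (f : α → ℝ) :
    ∫⁻ x, ENNReal.ofReal (c * f x) ∂μ = ENNReal.ofReal c * ∫⁻ x, ENNReal.ofReal (f x) ∂μ := by
  simp_rw [ENNReal.ofReal_mul hc]
  exact lintegral_const_mul' _ _ ENNReal.ofReal_ne_top

lemma lintegral_Ioi_comp_mul_left (f : ℝ → ENNReal) {b : ℝ} (hb : 0 < b) :
    ∫⁻ x in Ioi 0, f (b * x) = ENNReal.ofReal b⁻¹ * ∫⁻ x in Ioi 0, f x := by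
  have emb : MeasurableEmbedding (b * ·) := (Homeomorph.mulLeft₀ b hb.ne').measurableEmbedding
  have hpre : (b * ·) ⁻¹' Ioi 0 = Ioi (0:ℝ) := by ext x; simp [mul_pos_iff_of_pos_left hb]
  rw [← emb.lintegral_map, ← hpre, ← emb.restrict_map, Real.map_volume_mul_left hb.ne',
    Measure.restrict_smul, lintegral_smul_measure, abs_inv, abs_of_pos hb, smul_eq_mul, hpre]

lemma lintegral_comp_abs (g : ℝ → ENNReal) :
    ∫⁻ x, g |x| = 2 * ∫⁻ x in Ioi 0, g x := by
  have hpos : ∫⁻ x in Ioi 0, g |x| = ∫⁻ x in Ioi 0, g x :=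
    setLIntegral_congr_fun measurableSet_Ioi fun x hx => by rw [abs_of_pos hx]
  have hneg : ∫⁻ x in Iic 0, g |x| = ∫⁻ x in Ioi 0, g |x| := by
    have := (Measure.measurePreserving_neg (volume : Measure ℝ)).setLIntegral_comp_preimage_emb
      (Homeomorph.neg ℝ).measurableEmbedding (fun x => g |x|) (Ioi 0)
    simpa [Measure.restrict_congr_set Iio_ae_eq_Iic] using this
  rw [← lintegral_add_compl _ measurableSet_Ioi, compl_Ioi, hneg, hpos, two_mul]

lemma lintegral_rpow_mul_exp_neg_mul_rpow {p q b : ℝ} (hp : 0 < p) (hq : -1 < q) (hb : 0 < b) :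
    ∫⁻ x in Ioi 0, ENNReal.ofReal (x ^ q * exp (-b * x ^ p)) =
      ENNReal.ofReal (b ^ (-(q + 1) / p) * (1 / p) * Gamma ((q + 1) / p)) := by
  rw [← integral_rpow_mul_exp_neg_mul_rpow hp hq hb, ofReal_integral_eq_lintegral_ofReal
    (integrableOn_rpow_mul_exp_neg_mul_rpow hq hp hb)]
  filter_upwards [ae_restrict_mem measurableSet_Ioi] with x hx
  exact mul_nonneg (rpow_nonneg (le_of_lt hx) _) (exp_nonneg _)

lemma lintegral_rpow_mul_exp_neg_mul {q b : ℝ} (hq : -1 < q) (hb : 0 < b) :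
    ∫⁻ x in Ioi 0, ENNReal.ofReal (x ^ q * exp (-b * x)) =
      ENNReal.ofReal (b ^ (-(q + 1)) * Gamma (q + 1)) := by
  simpa using lintegral_rpow_mul_exp_neg_mul_rpow one_pos hq hb

lemma lintegral_exp_neg_mul {b : ℝ} (hb : 0 < b) :
    ∫⁻ x in Ioi 0, ENNReal.ofReal (exp (-b * x)) = ENNReal.ofReal b⁻¹ := by
  simpa [rpow_neg_one] using lintegral_rpow_mul_exp_neg_mul (q := 0) (by norm_num) hb

lemma lintegral_exp_neg_mul_mul_one_sub_cos {t : ℝ} (ht : 0 < t) :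
    ∫⁻ x in Ioi 0, ENNReal.ofReal (exp (-t * x) * (1 - cos x)) =
      ENNReal.ofReal (1 / (t * (1 + t ^ 2))) := by
  set a : ℂ := -t
  set c : ℂ := -t + Complex.I
  have ha : a.re < 0 := by simpa [a] using ht
  have hc : c.re < 0 := by simpa [c] using ht
  have hre : (fun x : ℝ => exp (-t * x) * (1 - cos x)) =
      fun x : ℝ => RCLike.re (Complex.exp (a * x) - Complex.exp (c * x)) := by
    ext x
    simp [a, c, Complex.exp_re]
    ring
  have hint : IntegrableOn (fun x : ℝ => Complex.exp (a * x) - Complex.exp (c * x)) (Ioi 0) :=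
    (integrableOn_exp_mul_complex_Ioi ha 0).sub (integrableOn_exp_mul_complex_Ioi hc 0)
  have hval : ∫ x in Ioi (0:ℝ), exp (-t * x) * (1 - cos x) = 1 / (t * (1 + t ^ 2)) := by
    rw [hre, integral_re hint, integral_sub (integrableOn_exp_mul_complex_Ioi ha 0)
      (integrableOn_exp_mul_complex_Ioi hc 0), integral_exp_mul_complex_Ioi ha,
      integral_exp_mul_complex_Ioi hc]
    simp [a, c, Complex.div_re, Complex.normSq_apply]
    field_simp
    ring
  rw [← hval, ofReal_integral_eq_lintegral_ofReal (hre ▸ hint.re)]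
  exact Filter.Eventually.of_forall fun x =>
    mul_nonneg (exp_nonneg _) (sub_nonneg.2 (cos_le_one x))

lemma lintegral_rpow_div_one_add_sq {s : ℝ} (hs : 0 < s) (hs2 : s < 2) :
    ∫⁻ t in Ioi 0, ENNReal.ofReal (t ^ (s - 1) / (1 + t ^ 2)) =
      ENNReal.ofReal (Gamma (s / 2) * Gamma (1 - s / 2) / 2) := by
  have hlaplace : ∀ t ∈ Ioi (0:ℝ), ENNReal.ofReal (t ^ (s - 1) / (1 + t ^ 2)) =
      ∫⁻ u in Ioi 0, ENNReal.ofReal (t ^ (s - 1) * exp (-(1 + t ^ 2) * u)) := by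
    intro t ht
    rw [lintegral_ofReal_const_mul _ (rpow_nonneg (le_of_lt ht) _),
      lintegral_exp_neg_mul (by positivity), ← ENNReal.ofReal_mul (rpow_nonneg (le_of_lt ht) _),
      div_eq_mul_inv]
  have hgauss : ∀ u ∈ Ioi (0:ℝ),
      ∫⁻ t in Ioi 0, ENNReal.ofReal (t ^ (s - 1) * exp (-(1 + t ^ 2) * u)) =
        ENNReal.ofReal (Gamma (s / 2) / 2 * (u ^ (-s / 2) * exp (-1 * u))) := by
    intro u hu
    have hsplit : ∀ t : ℝ, t ^ (s - 1) * exp (-(1 + t ^ 2) * u) =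
        exp (-u) * (t ^ (s - 1) * exp (-u * t ^ (2:ℝ))) := by
      intro t
      rw [rpow_two, mul_left_comm, ← exp_add]
      ring_nf
    simp_rw [hsplit]
    rw [lintegral_ofReal_const_mul _ (exp_nonneg _),
      lintegral_rpow_mul_exp_neg_mul_rpow two_pos (by linarith) hu,
      ← ENNReal.ofReal_mul (exp_nonneg _)]
    congr 1
    rw [show s - 1 + 1 = s by ring]
    ring_nf
  rw [setLIntegral_congr_fun measurableSet_Ioi hlaplace,
    lintegral_lintegral_swap (by fun_prop),
    setLIntegral_congr_fun measurableSet_Ioi hgauss,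
    lintegral_ofReal_const_mul _ (by positivity),
    lintegral_rpow_mul_exp_neg_mul (by linarith) one_pos, ← ENNReal.ofReal_mul (by positivity)]
  congr 1
  rw [show -s / 2 + 1 = 1 - s / 2 by ring]
  simp only [one_rpow, one_mul]
  ring

lemma lintegral_one_sub_cos_mul_rpow {s : ℝ} (hs : 0 < s) (hs2 : s < 2) :
    ∫⁻ x in Ioi 0, ENNReal.ofReal ((1 - cos x) * x ^ (-1 - s)) =
      ENNReal.ofReal (Gamma (s / 2) * Gamma (1 - s / 2) / (2 * Gamma (1 + s))) := by
  have hΓ : 0 < Gamma (1 + s) := Gamma_pos_of_pos (by linarith)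
  have hgamma : ∀ x ∈ Ioi (0:ℝ), ENNReal.ofReal ((1 - cos x) * x ^ (-1 - s)) =
      ∫⁻ t in Ioi 0, ENNReal.ofReal ((1 - cos x) / Gamma (1 + s) * (t ^ s * exp (-x * t))) := by
    intro x hx
    have hc : 0 ≤ (1 - cos x) / Gamma (1 + s) := div_nonneg (sub_nonneg.2 (cos_le_one x)) hΓ.le
    rw [lintegral_ofReal_const_mul _ hc, lintegral_rpow_mul_exp_neg_mul (by linarith) hx,
      ← ENNReal.ofReal_mul hc, add_comm s 1]
    congr 1
    field_simp
    ring_nf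
  have hcos : ∀ t ∈ Ioi (0:ℝ),
      ∫⁻ x in Ioi 0, ENNReal.ofReal ((1 - cos x) / Gamma (1 + s) * (t ^ s * exp (-x * t))) =
        ENNReal.ofReal ((Gamma (1 + s))⁻¹ * (t ^ (s - 1) / (1 + t ^ 2))) := by
    intro t ht
    have hsplit : ∀ x : ℝ, (1 - cos x) / Gamma (1 + s) * (t ^ s * exp (-x * t)) =
        t ^ s / Gamma (1 + s) * (exp (-t * x) * (1 - cos x)) := by
      intro x
      ring_nf
    have hc : 0 ≤ t ^ s / Gamma (1 + s) := div_nonneg (rpow_nonneg ht.le _) hΓ.le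
    simp_rw [hsplit]
    rw [lintegral_ofReal_const_mul _ hc, lintegral_exp_neg_mul_mul_one_sub_cos ht,
      ← ENNReal.ofReal_mul hc, rpow_sub_one ht.ne']
    congr 1
    field_simp
  rw [setLIntegral_congr_fun measurableSet_Ioi hgamma,
    lintegral_lintegral_swap (by fun_prop),
    setLIntegral_congr_fun measurableSet_Ioi hcos,
    lintegral_ofReal_const_mul _ (inv_nonneg.2 hΓ.le), lintegral_rpow_div_one_add_sq hs hs2,
    ← ENNReal.ofReal_mul (inv_nonneg.2 hΓ.le)]
  congr 1
  field_simp

lemma Gamma_mul_Gamma_one_sub_div_two_mul_Gamma_one_add_two_mul {H : ℝ} (h0 : 0 < H)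
    (h1 : H < 1 / 2) :
    Gamma H * Gamma (1 - H) / (2 * Gamma (1 + 2 * H)) =
      (2 * H)⁻¹ * Gamma (1 - 2 * H) * cos (H * π) := by
  have hsin : 0 < sin (π * H) := sin_pos_of_pos_of_lt_pi (by positivity) (by nlinarith [pi_pos])
  have hcos : 0 < cos (π * H) := cos_pos_of_mem_Ioo ⟨by nlinarith [pi_pos], by nlinarith [pi_pos]⟩
  have hΓ : 0 < Gamma (2 * H) := Gamma_pos_of_pos (by positivity)
  have hreflect : Gamma (2 * H) * Gamma (1 - 2 * H) = π / (2 * sin (π * H) * cos (π * H)) := by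
    rw [Gamma_mul_Gamma_one_sub, show π * (2 * H) = 2 * (π * H) by ring, sin_two_mul]
  have hΓ' : Gamma (1 - 2 * H) = π / (2 * sin (π * H) * cos (π * H)) / Gamma (2 * H) := by
    rw [← hreflect]
    field_simp
  rw [mul_comm H π, Gamma_mul_Gamma_one_sub, add_comm, Gamma_add_one (by positivity), hΓ']
  field_simp

lemma lintegral_one_sub_cos_mul_rpow_neg_one_sub_two_mul {H : ℝ} (h0 : 0 < H) (h1 : H < 1 / 2) :
    ∫⁻ x in Ioi 0, ENNReal.ofReal ((1 - cos x) * x ^ (-1 - 2 * H)) =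
      ENNReal.ofReal ((2 * H)⁻¹ * Gamma (1 - 2 * H) * cos (H * π)) := by
  rw [lintegral_one_sub_cos_mul_rpow (by positivity) (by linarith),
    ← Gamma_mul_Gamma_one_sub_div_two_mul_Gamma_one_add_two_mul h0 h1]
  ring_nf

lemma integral_one_sub_cos_mul_rpow_neg_one_sub_two_mul {H : ℝ} (h0 : 0 < H) (h1 : H < 1 / 2) :
    ∫ x in Ioi 0, (1 - cos x) * x ^ (-1 - 2 * H) =
      (2 * H)⁻¹ * Gamma (1 - 2 * H) * cos (H * π) := by
  have hpos : 0 ≤ (2 * H)⁻¹ * Gamma (1 - 2 * H) * cos (H * π) := by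
    have : 0 < Gamma (1 - 2 * H) := Gamma_pos_of_pos (by linarith)
    have : 0 < cos (H * π) := cos_pos_of_mem_Ioo ⟨by nlinarith [pi_pos], by nlinarith [pi_pos]⟩
    positivity
  rw [integral_eq_lintegral_of_nonneg_ae,
    lintegral_one_sub_cos_mul_rpow_neg_one_sub_two_mul h0 h1, ENNReal.toReal_ofReal hpos]
  · filter_upwards [ae_restrict_mem measurableSet_Ioi] with x (hx : 0 < x)
    exact mul_nonneg (sub_nonneg.2 (cos_le_one x)) (rpow_nonneg hx.le _)
  · fun_prop

lemma lintegral_one_sub_cos_const_mul_mul_rpow {s : ℝ} (hs : 0 < s) (a : ℝ) :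
    ∫⁻ x in Ioi 0, ENNReal.ofReal ((1 - cos (a * x)) * x ^ (-1 - s)) =
      ENNReal.ofReal (|a| ^ s) *
        ∫⁻ x in Ioi 0, ENNReal.ofReal ((1 - cos x) * x ^ (-1 - s)) := by
  rcases eq_or_ne a 0 with rfl | ha
  · simp [zero_rpow hs.ne']
  have hb : 0 < |a| := abs_pos.2 ha
  have hscale : ∀ x ∈ Ioi (0:ℝ), (1 - cos (a * x)) * x ^ (-1 - s) =
      |a| ^ (1 + s) * ((1 - cos (|a| * x)) * (|a| * x) ^ (-1 - s)) := by
    intro x (hx : 0 < x)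
    have hcos : cos (a * x) = cos (|a| * x) := by rw [← cos_abs, abs_mul, abs_of_pos hx]
    have hcancel : |a| ^ (1 + s) * |a| ^ (-1 - s) = 1 := by rw [← rpow_add hb]; simp
    rw [hcos, mul_rpow hb.le (le_of_lt hx)]
    linear_combination (-(1 - cos (|a| * x)) * x ^ (-1 - s)) * hcancel
  rw [setLIntegral_congr_fun measurableSet_Ioi fun x hx => by rw [hscale x hx],
    lintegral_ofReal_const_mul _ (by positivity),
    lintegral_Ioi_comp_mul_left (fun y => ENNReal.ofReal ((1 - cos y) * y ^ (-1 - s))) hb,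
    ← mul_assoc, ← ENNReal.ofReal_mul (by positivity), ← rpow_neg_one, ← rpow_add hb]
  ring_nf

lemma spatial_integrand_le (H s a ξ : ℝ) :
    (1 - exp (-(2 * s * ξ ^ 2))) / (2 * ξ ^ 2) * (1 - cos (a * ξ)) * |ξ| ^ (1 - 2 * H) ≤
      2⁻¹ * ((1 - cos (a * |ξ|)) * |ξ| ^ (-1 - 2 * H)) := by
  have hcos : cos (a * |ξ|) = cos (a * ξ) := by
    rw [← cos_abs (a * |ξ|), abs_mul, abs_abs, ← abs_mul, cos_abs]
  rw [hcos]
  rcases eq_or_ne ξ 0 with rfl | hξ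
  · simp
  have hξ' : 0 < |ξ| := abs_pos.2 hξ
  have hpow : |ξ| ^ (1 - 2 * H) / ξ ^ 2 = |ξ| ^ (-1 - 2 * H) := by
    rw [← sq_abs, ← rpow_natCast, ← rpow_sub hξ']
    norm_num
    ring_nf
  calc (1 - exp (-(2 * s * ξ ^ 2))) / (2 * ξ ^ 2) * (1 - cos (a * ξ)) * |ξ| ^ (1 - 2 * H)
      ≤ 1 / (2 * ξ ^ 2) * (1 - cos (a * ξ)) * |ξ| ^ (1 - 2 * H) := by
        gcongr
        · exact sub_nonneg.2 (cos_le_one _)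
        · linarith [exp_nonneg (-(2 * s * ξ ^ 2))]
    _ = 2⁻¹ * ((1 - cos (a * ξ)) * |ξ| ^ (-1 - 2 * H)) := by
        rw [← hpow]
        ring

theorem stmt13_general (H : ℝ) (hH : H ∈ Set.Ioo (0:ℝ) (1/2)) (s : ℝ) (a : ℝ) :
    (∫ x in Set.Ioi (0:ℝ), (1 - Real.cos x) * x ^ (-1 - 2*H)) =
      (2*H)⁻¹ * Real.Gamma (1 - 2*H) * Real.cos (H * Real.pi) ∧
    ∫⁻ ξ : ℝ, ENNReal.ofReal
        ((1 - Real.exp (-(2 * s * ξ^2))) / (2 * ξ^2) *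
          (1 - Real.cos (a * ξ)) * |ξ| ^ (1 - 2*H)) ≤
      ENNReal.ofReal
        (((2*H)⁻¹ * Real.Gamma (1 - 2*H) * Real.cos (H * Real.pi)) * |a| ^ (2*H)) := by
  obtain ⟨h0, h1⟩ := hH
  refine ⟨integral_one_sub_cos_mul_rpow_neg_one_sub_two_mul h0 h1, ?_⟩
  calc _ ≤ ∫⁻ ξ : ℝ, ENNReal.ofReal (2⁻¹ * ((1 - cos (a * |ξ|)) * |ξ| ^ (-1 - 2 * H))) :=
        lintegral_mono fun ξ => ENNReal.ofReal_le_ofReal (spatial_integrand_le H s a ξ)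
    _ = ∫⁻ x in Ioi 0, ENNReal.ofReal ((1 - cos (a * x)) * x ^ (-1 - 2 * H)) := by
        rw [lintegral_comp_abs fun x =>
            ENNReal.ofReal (2⁻¹ * ((1 - cos (a * x)) * x ^ (-1 - 2 * H))),
          lintegral_ofReal_const_mul _ (by norm_num), ← mul_assoc, ← ENNReal.ofReal_ofNat 2,
          ← ENNReal.ofReal_mul (by norm_num)]
        norm_num
    _ = _ := by
        rw [lintegral_one_sub_cos_const_mul_mul_rpow (by positivity) a,
          lintegral_one_sub_cos_mul_rpow_neg_one_sub_two_mul h0 h1,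
          ← ENNReal.ofReal_mul (by positivity), mul_comm]

/-- the spatial-increment integral bound
`∫_ℝ ((1−e^{−2sξ²})/(2ξ²)) (1−cos(aξ)) |ξ|^{1−2H} dξ ≤ c_{3,H} |a|^{2H}`, where
`c_{3,H} = ∫₀^∞ (1−cos x) x^{−1−2H} dx = (2H)⁻¹ Γ(1−2H) cos(Hπ)`. -/
theorem stmt13 (H : ℝ) (hH : H ∈ Set.Ioo (0:ℝ) (1/2)) (s : ℝ) (hs : 0 ≤ s) (a : ℝ) :
    (∫ x in Set.Ioi (0:ℝ), (1 - Real.cos x) * x ^ (-1 - 2*H)) =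
      (2*H)⁻¹ * Real.Gamma (1 - 2*H) * Real.cos (H * Real.pi) ∧
    ∫⁻ ξ : ℝ, ENNReal.ofReal
        ((1 - Real.exp (-(2 * s * ξ^2))) / (2 * ξ^2) *
          (1 - Real.cos (a * ξ)) * |ξ| ^ (1 - 2*H)) ≤
      ENNReal.ofReal
        (((2*H)⁻¹ * Real.Gamma (1 - 2*H) * Real.cos (H * Real.pi)) * |a| ^ (2*H)) :=
  stmt13_general H hH s a
end

section
/- Let F be a measure on the Borel sets of ℝ and ε ∈ (0,1/2] with c(ε)² := ∫_ℝ |λ|^{2ε} F(dλ) < ∞. Then for all t, s ≥ 0 and all x, y ∈ ℝ: ∫_ℝ | exp(iλx − λ²t) − exp(iλy − λ²s) |² F(dλ) ≤ c(ε)² ( 4^{1−ε} |x − y|^{2ε} + |t − s|^{ε} ). -/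
/-!
Write `exp(iλx − λ²t) = p e^{iλx}` with `p = e^{−λ²t} ∈ (0,1]`, and likewise `q e^{iλy}`. Then
`|p e^{ia} − q e^{ib}|² = (p − q)² + 2pq(1 − cos(a − b))`. Since `e^{−·}` is 1-Lipschitz on `[0,∞)`
with values in `(0,1]`, `(p − q)² ≤ min 1 (λ²|t − s|)`, and `2(1 − cos θ) ≤ min 4 θ²`. Finally
`min M u ≤ M^{1−ε} u^ε` turns both minima into the Hölder bounds, which are integrated against `F`.
-/

open MeasureTheory Real Set

lemma min_le_rpow_mul_rpow {M u ε : ℝ} (hM : 0 ≤ M) (hu : 0 ≤ u) (hε₀ : 0 ≤ ε) (hε₁ : ε ≤ 1) :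
    min M u ≤ M ^ (1 - ε) * u ^ ε := by
  have hm : 0 ≤ min M u := le_min hM hu
  calc min M u = min M u ^ (1 - ε) * min M u ^ ε := by
        rw [← rpow_add' hm (by norm_num), sub_add_cancel, rpow_one]
    _ ≤ M ^ (1 - ε) * u ^ ε :=
        mul_le_mul (rpow_le_rpow hm (min_le_left _ _) (by linarith))
          (rpow_le_rpow hm (min_le_right _ _) hε₀) (by positivity) (by positivity)

lemma sq_rpow_eq_abs_rpow (a ε : ℝ) : (a ^ 2) ^ ε = |a| ^ (2 * ε) := by
  rw [← sq_abs, ← rpow_natCast, ← rpow_mul (abs_nonneg a)]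
  norm_num

lemma abs_exp_neg_sub_exp_neg_le {a b : ℝ} (ha : 0 ≤ a) (hb : 0 ≤ b) :
    |exp (-a) - exp (-b)| ≤ min 1 |a - b| := by
  wlog hab : a ≤ b generalizing a b
  · rw [abs_sub_comm, abs_sub_comm a b]
    exact this hb ha (le_of_not_ge hab)
  have hfactor : exp (-a) - exp (-b) = exp (-a) * (1 - exp (-(b - a))) := by
    rw [mul_sub, ← exp_add]
    ring_nf
  have hpa : exp (-a) ≤ 1 := exp_le_one_iff.2 (by linarith)
  have hgap : exp (-(b - a)) ≤ 1 := exp_le_one_iff.2 (by linarith)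
  have htangent : 1 - (b - a) ≤ exp (-(b - a)) := one_sub_le_exp_neg _
  rw [hfactor, abs_of_nonneg (mul_nonneg (exp_pos _).le (sub_nonneg.2 hgap)),
    abs_of_nonpos (by linarith), le_min_iff]
  constructor <;> nlinarith [exp_pos (-a), exp_pos (-(b - a))]

lemma sq_exp_neg_sub_exp_neg_le_rpow {a b ε : ℝ} (ha : 0 ≤ a) (hb : 0 ≤ b) (hε₀ : 0 ≤ ε)
    (hε₁ : ε ≤ 1) : (exp (-a) - exp (-b)) ^ 2 ≤ |a - b| ^ ε := by
  have hd := abs_exp_neg_sub_exp_neg_le ha hb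
  calc (exp (-a) - exp (-b)) ^ 2 = |exp (-a) - exp (-b)| * |exp (-a) - exp (-b)| := by
        rw [← sq_abs, sq]
    _ ≤ 1 * min 1 |a - b| := mul_le_mul (hd.trans (min_le_left _ _)) hd (abs_nonneg _) zero_le_one
    _ ≤ |a - b| ^ ε := by
        simpa using min_le_rpow_mul_rpow zero_le_one (abs_nonneg (a - b)) hε₀ hε₁

lemma two_mul_one_sub_cos_le_rpow (θ : ℝ) {ε : ℝ} (hε₀ : 0 ≤ ε) (hε₁ : ε ≤ 1) :
    2 * (1 - cos θ) ≤ 4 ^ (1 - ε) * |θ| ^ (2 * ε) := by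
  have hmin : 2 * (1 - cos θ) ≤ min 4 (θ ^ 2) :=
    le_min (by linarith [neg_one_le_cos θ]) (by linarith [one_sub_sq_div_two_le_cos (x := θ)])
  rw [← sq_rpow_eq_abs_rpow]
  exact hmin.trans (min_le_rpow_mul_rpow (by norm_num) (sq_nonneg θ) hε₀ hε₁)

lemma norm_ofReal_mul_exp_sub_ofReal_mul_exp_sq (p q a b : ℝ) :
    ‖(p : ℂ) * Complex.exp (a * Complex.I) - (q : ℂ) * Complex.exp (b * Complex.I)‖ ^ 2
      = (p - q) ^ 2 + 2 * p * q * (1 - cos (a - b)) := by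
  rw [Complex.sq_norm, Complex.normSq_apply]
  simp [Complex.exp_mul_I, cos_sub, Complex.cos_ofReal_re, Complex.sin_ofReal_re]
  linear_combination p ^ 2 * sin_sq_add_cos_sq a + q ^ 2 * sin_sq_add_cos_sq b

lemma exp_I_mul_sub_sq_mul (l x t : ℝ) :
    Complex.exp (Complex.I * l * x - (l : ℂ) ^ 2 * t)
      = (exp (-(l ^ 2 * t)) : ℂ) * Complex.exp ((l * x : ℝ) * Complex.I) := by
  rw [Complex.ofReal_exp, ← Complex.exp_add]
  push_cast
  ring_nf

lemma norm_exp_I_mul_sub_sq_mul_sub_sq_le {ε t s : ℝ} (hε₀ : 0 ≤ ε) (hε₁ : ε ≤ 1) (ht : 0 ≤ t)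
    (hs : 0 ≤ s) (x y l : ℝ) :
    ‖Complex.exp (Complex.I * l * x - (l : ℂ) ^ 2 * t) -
        Complex.exp (Complex.I * l * y - (l : ℂ) ^ 2 * s)‖ ^ 2
      ≤ |l| ^ (2 * ε) * (4 ^ (1 - ε) * |x - y| ^ (2 * ε) + |t - s| ^ ε) := by
  rw [exp_I_mul_sub_sq_mul, exp_I_mul_sub_sq_mul, norm_ofReal_mul_exp_sub_ofReal_mul_exp_sq]
  have hp : exp (-(l ^ 2 * t)) ≤ 1 := exp_le_one_iff.2 (by nlinarith [sq_nonneg l])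
  have hq : exp (-(l ^ 2 * s)) ≤ 1 := exp_le_one_iff.2 (by nlinarith [sq_nonneg l])
  have hmodulus : (exp (-(l ^ 2 * t)) - exp (-(l ^ 2 * s))) ^ 2 ≤ |l| ^ (2 * ε) * |t - s| ^ ε :=
    calc _ ≤ |l ^ 2 * t - l ^ 2 * s| ^ ε :=
          sq_exp_neg_sub_exp_neg_le_rpow (by positivity) (by positivity) hε₀ hε₁
      _ = |l| ^ (2 * ε) * |t - s| ^ ε := by
          rw [← mul_sub, abs_mul, abs_of_nonneg (sq_nonneg l),
            mul_rpow (sq_nonneg l) (abs_nonneg _), sq_rpow_eq_abs_rpow]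
  have hphase : 2 * exp (-(l ^ 2 * t)) * exp (-(l ^ 2 * s)) * (1 - cos (l * x - l * y))
      ≤ |l| ^ (2 * ε) * (4 ^ (1 - ε) * |x - y| ^ (2 * ε)) := by
    have hcos : 0 ≤ 1 - cos (l * x - l * y) := sub_nonneg.2 (cos_le_one _)
    have hpq : exp (-(l ^ 2 * t)) * exp (-(l ^ 2 * s)) ≤ 1 := mul_le_one₀ hp (exp_pos _).le hq
    calc _ ≤ 2 * (1 - cos (l * (x - y))) := by
          rw [mul_sub l x y]
          nlinarith
      _ ≤ 4 ^ (1 - ε) * |l * (x - y)| ^ (2 * ε) := two_mul_one_sub_cos_le_rpow _ hε₀ hε₁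
      _ = _ := by
          rw [abs_mul, mul_rpow (abs_nonneg _) (abs_nonneg _)]
          ring
  linarith

/-- if `c(ε)² = ∫_ℝ |λ|^{2ε} F(dλ) < ∞` for some `ε ∈ (0,1/2]`, then
`∫_ℝ |exp(iλx − λ²t) − exp(iλy − λ²s)|² F(dλ) ≤ c(ε)² (4^{1−ε}|x−y|^{2ε} + |t−s|^ε)`. -/
theorem stmt15 (F : Measure ℝ) (ε : ℝ) (hε : ε ∈ Set.Ioc (0:ℝ) (1/2))
    (hF : Integrable (fun l : ℝ => |l| ^ (2*ε)) F) :
    ∀ t s : ℝ, 0 ≤ t → 0 ≤ s → ∀ x y : ℝ,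
      ∫⁻ l : ℝ, ENNReal.ofReal
          (‖Complex.exp (Complex.I * l * x - (l:ℂ)^2 * t) -
            Complex.exp (Complex.I * l * y - (l:ℂ)^2 * s)‖ ^ 2) ∂F ≤
        ENNReal.ofReal ((∫ l : ℝ, |l| ^ (2*ε) ∂F) *
          (4 ^ (1 - ε) * |x - y| ^ (2*ε) + |t - s| ^ ε)) := by
  intro t s ht hs x y
  obtain ⟨hε₀, hε₁⟩ := hε
  set C : ℝ := 4 ^ (1 - ε) * |x - y| ^ (2 * ε) + |t - s| ^ ε
  calc _ ≤ ∫⁻ l : ℝ, ENNReal.ofReal (|l| ^ (2 * ε) * C) ∂F :=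
        lintegral_mono fun l => ENNReal.ofReal_le_ofReal
          (norm_exp_I_mul_sub_sq_mul_sub_sq_le hε₀.le (by linarith) ht hs x y l)
    _ = ENNReal.ofReal ((∫ l : ℝ, |l| ^ (2 * ε) ∂F) * C) := by
        rw [← integral_mul_const,
          ofReal_integral_eq_lintegral_ofReal (hF.mul_const C) (ae_of_all _ fun l => by positivity)]
end
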